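/- Let α ∈ (1,2) and let g : [0,1] → ℝ be a bounded measurable function. Define Ψ(u) = (1+u)·log(1+u) − u for u > −1. Then lim_{ε→0⁺} ε^{−2} · ∫₀¹ ∫_{−1}^{1} Ψ( ε·g(t)·x ) · |x|^{−1−α} dx dt = (1/(2−α)) · ∫₀¹ g(t)² dt. -/

import Mathlib

/-!
Since `Ψ(u) = u²/2 + O(|u|³)` near `0` and `|x|^(3-1-α) ≤ 1` on `[-1, 1]`, for `|c| ≤ 1/2`
`∫_{-1}^{1} Ψ(c x) |x|^(-1-α) dx = (c²/2) ∫_{-1}^{1} |x|^(1-α) dx + O(|c|³) = c²/(2-α) + O(|c|³)`.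
With `c = ε g(t)`, uniformly small because `g` is bounded, integrating in `t` gives
`ε² (2-α)⁻¹ ∫₀¹ g² + O(ε³)`.
-/

open MeasureTheory Filter Set Topology
open scoped Interval

noncomputable section

def psi (u : ℝ) : ℝ := (1 + u) * Real.log (1 + u) - u

@[fun_prop]
lemma measurable_psi : Measurable psi := by
  unfold psi; fun_prop

lemma abs_log_one_add_sub_self_le {u : ℝ} (hu : |u| ≤ 1 / 2) :
    |Real.log (1 + u) - u| ≤ 2 * u ^ 2 := by
  have h := Real.abs_log_sub_add_sum_range_le (x := -u) (by rw [abs_neg]; linarith) 1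
  simp only [Finset.sum_range_one, pow_one, Nat.cast_zero, zero_add, div_one, abs_neg,
    sub_neg_eq_add] at h
  calc |Real.log (1 + u) - u| = |-u + Real.log (1 + u)| := by rw [neg_add_eq_sub]
    _ ≤ |u| ^ (1 + 1) / (1 - |u|) := h
    _ ≤ 2 * u ^ 2 := by
      rw [div_le_iff₀ (by linarith), one_add_one_eq_two, sq_abs]
      nlinarith [sq_nonneg u]

lemma hasDerivAt_psi {u : ℝ} (hu : -1 < u) : HasDerivAt psi (Real.log (1 + u)) u := by
  have h1 : HasDerivAt (fun v : ℝ => 1 + v) 1 u := (hasDerivAt_id' u).const_add 1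
  refine ((h1.fun_mul (h1.log (by linarith))).fun_sub (hasDerivAt_id' u)).congr_deriv ?_
  field_simp [show 1 + u ≠ 0 by linarith]
  ring

lemma abs_psi_sub_sq_div_two_le {u : ℝ} (hu : |u| ≤ 1 / 2) :
    |psi u - u ^ 2 / 2| ≤ 2 * |u| ^ 3 := by
  have hsub : uIcc 0 u ⊆ Icc (-(1 / 2)) (1 / 2) :=
    uIcc_subset_Icc (by simp) (abs_le.1 hu)
  have hderiv : ∀ v ∈ uIcc 0 u,
      HasDerivWithinAt (fun v => psi v - v ^ 2 / 2) (Real.log (1 + v) - v) (uIcc 0 u) v := by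
    intro v hv
    have hv' := hsub hv
    refine ((hasDerivAt_psi (by linarith [hv'.1])).sub
      ((hasDerivAt_pow 2 v).div_const 2)).hasDerivWithinAt.congr_deriv ?_
    ring
  have hbound : ∀ v ∈ uIcc 0 u, ‖Real.log (1 + v) - v‖ ≤ 2 * u ^ 2 := by
    intro v hv
    have hvu : |v| ≤ |u| := by simpa using abs_sub_left_of_mem_uIcc hv
    calc ‖Real.log (1 + v) - v‖ ≤ 2 * v ^ 2 := abs_log_one_add_sub_self_le (abs_le.2 (hsub hv))
      _ ≤ 2 * u ^ 2 := by rw [← sq_abs v, ← sq_abs u]; gcongr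
  have hmvt := (convex_uIcc (0 : ℝ) u).norm_image_sub_le_of_norm_hasDerivWithin_le
    hderiv hbound left_mem_uIcc right_mem_uIcc
  calc |psi u - u ^ 2 / 2| = ‖(psi u - u ^ 2 / 2) - (psi 0 - 0 ^ 2 / 2)‖ := by simp [psi]
    _ ≤ 2 * u ^ 2 * ‖u - 0‖ := hmvt
    _ = 2 * |u| ^ 3 := by rw [sub_zero, Real.norm_eq_abs, ← sq_abs u]; ring

lemma intervalIntegrable_abs_rpow {r : ℝ} (hr : -1 < r) (a b : ℝ) :
    IntervalIntegrable (fun x : ℝ => |x| ^ r) volume a b := by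
  have hnonneg {c : ℝ} (hc : 0 ≤ c) : IntervalIntegrable (fun x : ℝ => |x| ^ r) volume 0 c :=
    (intervalIntegral.intervalIntegrable_rpow' hr).congr fun x hx => by
      rw [uIoc_of_le hc] at hx
      simp [abs_of_pos hx.1]
  have h0 (c : ℝ) : IntervalIntegrable (fun x : ℝ => |x| ^ r) volume 0 c := by
    rcases le_total 0 c with hc | hc
    · exact hnonneg hc
    · rw [IntervalIntegrable.iff_comp_neg]
      simpa using hnonneg (neg_nonneg.2 hc)
  exact (h0 a).symm.trans (h0 b)

lemma integral_abs_rpow_neg_one_one {r : ℝ} (hr : -1 < r) :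
    ∫ x in (-1 : ℝ)..1, |x| ^ r = 2 / (r + 1) := by
  have hpos : ∫ x in (0 : ℝ)..1, |x| ^ r = 1 / (r + 1) := by
    rw [intervalIntegral.integral_congr (g := fun x : ℝ => x ^ r) fun x hx => by
      rw [uIcc_of_le zero_le_one] at hx; simp [abs_of_nonneg hx.1],
      integral_rpow (Or.inl hr), Real.one_rpow, Real.zero_rpow (by linarith), sub_zero]
  have hneg : ∫ x in (-1 : ℝ)..0, |x| ^ r = 1 / (r + 1) := by
    simpa [hpos] using
      (intervalIntegral.integral_comp_neg (a := 0) (b := 1) fun x : ℝ => |x| ^ r).symm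
  rw [← intervalIntegral.integral_add_adjacent_intervals (intervalIntegrable_abs_rpow hr _ _)
    (intervalIntegrable_abs_rpow hr _ _), hpos, hneg]
  ring

def psiKernelIntegral (α c : ℝ) : ℝ := ∫ x in (-1 : ℝ)..1, psi (c * x) * |x| ^ (-1 - α)

-- `x ≠ 0` is needed: at `α = 1` the second term is `c²/2` at `x = 0` since `0 ^ 0 = 1`.
lemma abs_psi_mul_abs_rpow_sub_le {α c x : ℝ} (hα : α ≤ 2) (hc : |c| ≤ 1 / 2)
    (hx : |x| ≤ 1) (hx0 : x ≠ 0) :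
    |psi (c * x) * |x| ^ (-1 - α) - c ^ 2 / 2 * |x| ^ (1 - α)| ≤ 2 * |c| ^ 3 := by
  have hxpos : 0 < |x| := abs_pos.2 hx0
  have hcx : |c * x| ≤ 1 / 2 := by
    rw [abs_mul]; nlinarith [abs_nonneg c, abs_nonneg x]
  have hsplit : psi (c * x) * |x| ^ (-1 - α) - c ^ 2 / 2 * |x| ^ (1 - α)
      = (psi (c * x) - (c * x) ^ 2 / 2) * |x| ^ (-1 - α) := by
    rw [show (1 : ℝ) - α = 2 + (-1 - α) by ring, Real.rpow_add hxpos, Real.rpow_two, sq_abs]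
    ring
  have hpow : |x| ^ (3 : ℕ) * |x| ^ (-1 - α) ≤ 1 := by
    rw [← Real.rpow_natCast, ← Real.rpow_add hxpos]
    exact Real.rpow_le_one hxpos.le hx (by push_cast; linarith)
  calc |psi (c * x) * |x| ^ (-1 - α) - c ^ 2 / 2 * |x| ^ (1 - α)|
      = |psi (c * x) - (c * x) ^ 2 / 2| * |x| ^ (-1 - α) := by
        rw [hsplit, abs_mul, abs_of_nonneg (Real.rpow_nonneg hxpos.le _)]
    _ ≤ 2 * |c * x| ^ 3 * |x| ^ (-1 - α) := by
        gcongr; exact abs_psi_sub_sq_div_two_le hcx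
    _ = 2 * |c| ^ 3 * (|x| ^ (3 : ℕ) * |x| ^ (-1 - α)) := by rw [abs_mul]; ring
    _ ≤ 2 * |c| ^ 3 := mul_le_of_le_one_right (by positivity) hpow

lemma abs_psiKernelIntegral_sub_le {α c : ℝ} (hα : α < 2) (hc : |c| ≤ 1 / 2) :
    |psiKernelIntegral α c - 1 / (2 - α) * c ^ 2| ≤ 4 * |c| ^ 3 := by
  set E : ℝ → ℝ := fun x => psi (c * x) * |x| ^ (-1 - α) - c ^ 2 / 2 * |x| ^ (1 - α)
  have hEbound : ∀ᵐ x, x ∈ Ι (-1 : ℝ) 1 → ‖E x‖ ≤ 2 * |c| ^ 3 := by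
    filter_upwards [Measure.ae_ne volume 0] with x hx0 hx
    rw [uIoc_of_le (by norm_num)] at hx
    exact abs_psi_mul_abs_rpow_sub_le hα.le hc (abs_le.2 ⟨hx.1.le, hx.2⟩) hx0
  have hmain : IntervalIntegrable (fun x : ℝ => c ^ 2 / 2 * |x| ^ (1 - α)) volume (-1) 1 :=
    (intervalIntegrable_abs_rpow (by linarith) _ _).const_mul _
  have hE : IntervalIntegrable E volume (-1) 1 := by
    rw [intervalIntegrable_iff_integrableOn_Ioc_of_le (by norm_num)]
    refine IntegrableOn.of_bound measure_Ioc_lt_top ?_ (2 * |c| ^ 3) ?_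
    · unfold E; fun_prop
    · rw [← uIoc_of_le (show (-1 : ℝ) ≤ 1 by norm_num)]
      exact (ae_restrict_iff' measurableSet_uIoc).2 hEbound
  have hsplit : psiKernelIntegral α c
      = (∫ x in (-1 : ℝ)..1, c ^ 2 / 2 * |x| ^ (1 - α)) + ∫ x in (-1 : ℝ)..1, E x := by
    rw [← intervalIntegral.integral_add hmain hE]
    simp [psiKernelIntegral, E]
  have hmain_eq : ∫ x in (-1 : ℝ)..1, c ^ 2 / 2 * |x| ^ (1 - α) = 1 / (2 - α) * c ^ 2 := by
    rw [intervalIntegral.integral_const_mul, integral_abs_rpow_neg_one_one (by linarith),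
      show 1 - α + 1 = 2 - α by ring]
    ring
  calc |psiKernelIntegral α c - 1 / (2 - α) * c ^ 2| = ‖∫ x in (-1 : ℝ)..1, E x‖ := by
        rw [hsplit, hmain_eq, add_sub_cancel_left, Real.norm_eq_abs]
    _ ≤ 2 * |c| ^ 3 * |1 - (-1)| := intervalIntegral.norm_integral_le_of_norm_le_const_ae hEbound
    _ = 4 * |c| ^ 3 := by norm_num; ring

lemma measurable_psiKernelIntegral (α : ℝ) : Measurable (psiKernelIntegral α) := by
  have hIoc : psiKernelIntegral α =
      fun c => ∫ x in Ioc (-1 : ℝ) 1, psi (c * x) * |x| ^ (-1 - α) :=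
    funext fun c => intervalIntegral.integral_of_le (by norm_num)
  have hjoint : StronglyMeasurable fun p : ℝ × ℝ => psi (p.1 * p.2) * |p.2| ^ (-1 - α) :=
    (by fun_prop : Measurable _).stronglyMeasurable
  rw [hIoc]
  exact hjoint.integral_prod_right'.measurable

lemma integral_comp_mul_abs_rpow_eq_psiKernelIntegral {Ψ : ℝ → ℝ}
    (hΨ : ∀ u : ℝ, -1 < u → Ψ u = psi u) (α : ℝ) {c : ℝ} (hc : |c| < 1) :
    ∫ x in (-1 : ℝ)..1, Ψ (c * x) * |x| ^ (-1 - α) = psiKernelIntegral α c := by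
  refine intervalIntegral.integral_congr fun x hx => ?_
  rw [uIcc_of_le (by norm_num)] at hx
  have : |c * x| < 1 := by
    rw [abs_mul]; exact mul_lt_one_of_nonneg_of_lt_one_left (abs_nonneg c) hc (abs_le.2 hx)
  simp only [hΨ _ (neg_lt_of_abs_lt this)]

section RescaledIntegral

variable {Ω : Type*} [MeasurableSpace Ω] {μ : Measure Ω} [IsFiniteMeasure μ]
  {Φ : ℝ → ℝ} {K C r : ℝ} {g : Ω → ℝ} {M : ℝ}

lemma abs_inv_sq_mul_integral_comp_mul_sub_le (hΦm : Measurable Φ)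
    (hΦ : ∀ c, |c| ≤ r → |Φ c - K * c ^ 2| ≤ C * |c| ^ 3) (hC : 0 ≤ C)
    (hg : AEMeasurable g μ) (hM : ∀ᵐ t ∂μ, |g t| ≤ M) {ε : ℝ} (hε : 0 < ε) (hεM : ε * |M| ≤ r) :
    |(ε ^ 2)⁻¹ * ∫ t, Φ (ε * g t) ∂μ - K * ∫ t, g t ^ 2 ∂μ| ≤ C * |M| ^ 3 * μ.real univ * ε := by
  have hgε : ∀ᵐ t ∂μ, |ε * g t| ≤ ε * |M| := hM.mono fun t ht => by
    rw [abs_mul, abs_of_pos hε]; exact mul_le_mul_of_nonneg_left (ht.trans (le_abs_self M)) hε.le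
  have hpt : ∀ᵐ t ∂μ, ‖(ε ^ 2)⁻¹ * Φ (ε * g t) - K * g t ^ 2‖ ≤ C * |M| ^ 3 * ε := by
    filter_upwards [hgε] with t ht
    have hrem := hΦ _ (ht.trans hεM)
    calc ‖(ε ^ 2)⁻¹ * Φ (ε * g t) - K * g t ^ 2‖
        = ‖(ε ^ 2)⁻¹ * (Φ (ε * g t) - K * (ε * g t) ^ 2)‖ := by congr 1; field_simp
      _ = (ε ^ 2)⁻¹ * |Φ (ε * g t) - K * (ε * g t) ^ 2| := by
          rw [Real.norm_eq_abs, abs_mul, abs_of_pos (by positivity)]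
      _ ≤ (ε ^ 2)⁻¹ * (C * (ε * |M|) ^ 3) := by
          gcongr; exact hrem.trans (by gcongr)
      _ = C * |M| ^ 3 * ε := by field_simp
  have hg2 : Integrable (fun t => K * g t ^ 2) μ := by
    refine (Integrable.of_bound (hg.pow_const 2).aestronglyMeasurable (|M| ^ 2) ?_).const_mul K
    filter_upwards [hM] with t ht
    rw [Real.norm_eq_abs, abs_pow]
    exact pow_le_pow_left₀ (abs_nonneg _) (ht.trans (le_abs_self M)) 2
  have hR : Integrable (fun t => (ε ^ 2)⁻¹ * Φ (ε * g t) - K * g t ^ 2) μ :=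
    Integrable.of_bound (by fun_prop) _ hpt
  have hΦg : Integrable (fun t => (ε ^ 2)⁻¹ * Φ (ε * g t)) μ := by
    refine (hR.add hg2).congr (.of_forall fun t => ?_)
    simp
  rw [← integral_const_mul, ← integral_const_mul, ← integral_sub hΦg hg2, ← Real.norm_eq_abs]
  calc _ ≤ C * |M| ^ 3 * ε * μ.real univ := norm_integral_le_of_norm_le_const hpt
    _ = _ := by ring

lemma tendsto_rpow_neg_two_mul_integral_comp_mul (hΦm : Measurable Φ) (hr : 0 < r)
    (hΦ : ∀ c, |c| ≤ r → |Φ c - K * c ^ 2| ≤ C * |c| ^ 3)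
    (hg : AEMeasurable g μ) (hM : ∀ᵐ t ∂μ, |g t| ≤ M) :
    Tendsto (fun ε : ℝ => ε ^ (-2 : ℝ) * ∫ t, Φ (ε * g t) ∂μ) (𝓝[>] 0)
      (𝓝 (K * ∫ t, g t ^ 2 ∂μ)) := by
  have hC : 0 ≤ C := by
    have := (abs_nonneg _).trans (hΦ r (abs_of_pos hr).le)
    exact nonneg_of_mul_nonneg_left this (by positivity)
  have hlin : Tendsto (fun ε : ℝ => C * |M| ^ 3 * μ.real univ * ε) (𝓝[>] 0) (𝓝 0) :=
    ((continuous_const_mul _).tendsto' 0 0 (mul_zero _)).mono_left nhdsWithin_le_nhds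
  rw [tendsto_iff_norm_sub_tendsto_zero]
  refine squeeze_zero' (Eventually.of_forall fun _ => norm_nonneg _) ?_ hlin
  filter_upwards [Ioo_mem_nhdsGT (show 0 < r / (|M| + 1) by positivity)] with ε ⟨hε, hεr⟩
  have hεM : ε * |M| ≤ r := by
    rw [lt_div_iff₀ (by positivity)] at hεr; nlinarith
  rw [Real.rpow_neg hε.le, Real.rpow_two]
  exact abs_inv_sq_mul_integral_comp_mul_sub_le hΦm hΦ hC hg hM hε hεM

end RescaledIntegral

/-- For `Ψ(u) = (1+u)log(1+u) - u`, `α ∈ (1,2)` and a bounded measurable `g`: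
`lim_{ε→0⁺} ε^{-2} ∫₀¹∫_{-1}^{1} Ψ(ε g(t) x)|x|^{-1-α} dx dt
   = (1/(2-α)) ∫₀¹ g(t)² dt`. -/
theorem psi_small_parameter_limit
    (α : ℝ) (hα : α ∈ Ioo (1:ℝ) 2)
    (g : ℝ → ℝ) (hg : Measurable g) (M : ℝ) (hM : ∀ t ∈ Icc (0:ℝ) 1, |g t| ≤ M)
    (Ψ : ℝ → ℝ) (hΨ : ∀ u : ℝ, -1 < u → Ψ u = (1 + u) * Real.log (1 + u) - u) :
    Tendsto (fun ε : ℝ => ε ^ (-2 : ℝ) *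
        ∫ t in Icc (0:ℝ) 1, ∫ x in (-1:ℝ)..1, Ψ (ε * g t * x) * |x| ^ (-1 - α))
      (𝓝[>] (0:ℝ)) (𝓝 ((1 / (2 - α)) * ∫ t in Icc (0:ℝ) 1, g t ^ 2)) := by
  have hlim := tendsto_rpow_neg_two_mul_integral_comp_mul (μ := volume.restrict (Icc 0 1))
    (measurable_psiKernelIntegral α) one_half_pos
    (fun c hc => abs_psiKernelIntegral_sub_le hα.2 hc) hg.aemeasurable
    (ae_restrict_of_forall_mem measurableSet_Icc hM)
  refine hlim.congr' ?_
  filter_upwards [Ioo_mem_nhdsGT (show (0 : ℝ) < 1 / (|M| + 1) by positivity)] with ε ⟨hε, hεM⟩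
  congr 1
  refine setIntegral_congr_fun measurableSet_Icc fun t ht =>
    (integral_comp_mul_abs_rpow_eq_psiKernelIntegral hΨ α ?_).symm
  rw [lt_div_iff₀ (by positivity)] at hεM
  calc |ε * g t| = ε * |g t| := by rw [abs_mul, abs_of_pos hε]
    _ ≤ ε * |M| := mul_le_mul_of_nonneg_left ((hM t ht).trans (le_abs_self M)) hε.le
    _ < 1 := by nlinarith
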